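/- arXiv:1805.07507 — 3 statements merged into one kernel-verified Lean document; each statement's English description precedes it below -/
import Mathlib

section
/- (Universal approximation by one-hidden-layer sigmoid networks.) Let σ(t) = 1/(1 + exp(-t)) be the logistic sigmoid, and let g : (Fin d → ℝ) → ℝ be continuous. Then for every ε > 0 there exist a number of hidden units e : ℕ, output weights u : Fin e → ℝ, hidden weights w : Fin e → (Fin d → ℝ), and biases b : Fin e → ℝ such that for every x in the unit cube [0,1]^d (i.e. ∀ j, 0 ≤ x j ∧ x j ≤ 1), |g x - ∑_{i : Fin e} u i * σ(b i + ∑_{j} w i j * x j)| < ε. In particular, any deep neural network function (being continuous) can be approximated to any accuracy ε > 0 by a one-hidden-layer sigmoid network on [0,1]^d. -/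
/-- The logistic sigmoid. -/
noncomputable def sigmoid (t : ℝ) : ℝ := 1 / (1 + Real.exp (-t))

lemma exp_mul_sigmoid (a M : ℝ) :
    Real.exp M * sigmoid (a - M) = Real.exp a / (1 + Real.exp (a - M)) := by
  unfold sigmoid
  have h1 : (0:ℝ) < 1 + Real.exp (-(a - M)) := by positivity
  have h2 : (0:ℝ) < 1 + Real.exp (a - M) := by positivity
  rw [mul_one_div, div_eq_div_iff h1.ne' h2.ne']
  have e1 : Real.exp M * Real.exp (a - M) = Real.exp a := by
    rw [← Real.exp_add]; ring_nf
  have e2 : Real.exp a * Real.exp (-(a - M)) = Real.exp M := by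
    rw [← Real.exp_add]; ring_nf
  nlinarith [e1, e2]

lemma sigmoid_approx_exp {a B M : ℝ} (haB : a ≤ B) :
    |Real.exp a - Real.exp M * sigmoid (a - M)| ≤ Real.exp (2 * B - M) := by
  rw [exp_mul_sigmoid]
  have h2 : (0:ℝ) < 1 + Real.exp (a - M) := by positivity
  have key : Real.exp a - Real.exp a / (1 + Real.exp (a - M))
      = Real.exp a * Real.exp (a - M) / (1 + Real.exp (a - M)) := by
    field_simp; ring
  rw [key, abs_of_nonneg (by positivity)]
  have h3 : Real.exp a * Real.exp (a - M) / (1 + Real.exp (a - M))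
      ≤ Real.exp a * Real.exp (a - M) := by
    apply div_le_self (by positivity)
    linarith [Real.exp_pos (a - M)]
  calc Real.exp a * Real.exp (a - M) / (1 + Real.exp (a - M))
      ≤ Real.exp a * Real.exp (a - M) := h3
    _ = Real.exp (2 * a - M) := by rw [← Real.exp_add]; ring_nf
    _ ≤ Real.exp (2 * B - M) := Real.exp_le_exp.mpr (by linarith)

/-- Universal approximation: every continuous function on the unit cube `[0,1]^d`
can be approximated to accuracy `ε` by a one-hidden-layer sigmoid network. -/
theorem universal_approximation (d : ℕ) (g : (Fin d → ℝ) → ℝ) (hg : Continuous g)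
    (ε : ℝ) (hε : 0 < ε) :
    ∃ (e : ℕ) (u : Fin e → ℝ) (w : Fin e → Fin d → ℝ) (b : Fin e → ℝ),
      ∀ x : Fin d → ℝ, (∀ j, 0 ≤ x j ∧ x j ≤ 1) →
        |g x - ∑ i, u i * sigmoid (b i + ∑ j, w i j * x j)| < ε := by
  classical
  set K : Set (Fin d → ℝ) := Set.Icc 0 1 with hKdef
  have hKc : IsCompact K := isCompact_Icc
  haveI : CompactSpace K := isCompact_iff_compactSpace.mp hKc
  -- exponential ridge functions
  let E : (Fin d → ℝ) → C(K, ℝ) := fun w =>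
    ⟨fun x => Real.exp (∑ j, w j * (x : Fin d → ℝ) j), by
      apply Real.continuous_exp.comp
      exact continuous_finset_sum _ fun j _ =>
        (continuous_const.mul ((continuous_apply j).comp continuous_subtype_val))⟩
  have Eapp : ∀ w (x : K), E w x = Real.exp (∑ j, w j * (x : Fin d → ℝ) j) :=
    fun _ _ => rfl
  let S : Set C(K, ℝ) := Set.range E
  have Smul : ∀ a ∈ S, ∀ b ∈ S, a * b ∈ S := by
    rintro _ ⟨w, rfl⟩ _ ⟨w', rfl⟩
    refine ⟨w + w', ?_⟩
    ext x
    simp only [Eapp, ContinuousMap.mul_apply, ← Real.exp_add,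
      ← Finset.sum_add_distrib, Pi.add_apply, add_mul]
  have Sone : (1 : C(K, ℝ)) ∈ S := by
    refine ⟨0, ?_⟩
    ext x
    simp [Eapp]
  let Mo : Submonoid C(K, ℝ) :=
    { carrier := S
      mul_mem' := fun {a b} ha hb => Smul a ha b hb
      one_mem' := Sone }
  let A : Subalgebra ℝ C(K, ℝ) := Algebra.adjoin ℝ S
  have hsep : A.SeparatesPoints := by
    rintro x y hxy
    have hex : ∃ j, (x : Fin d → ℝ) j ≠ (y : Fin d → ℝ) j := by
      by_contra h
      push_neg at h
      exact hxy (Subtype.ext (funext h))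
    obtain ⟨j, hj⟩ := hex
    have hmem : E (Pi.single j 1) ∈ A := Algebra.subset_adjoin ⟨_, rfl⟩
    refine ⟨E (Pi.single j 1), ⟨E (Pi.single j 1), hmem, rfl⟩, ?_⟩
    have hx : ∀ z : K, (∑ j', (Pi.single j 1 : Fin d → ℝ) j' * (z : Fin d → ℝ) j')
        = (z : Fin d → ℝ) j := by
      intro z
      rw [Finset.sum_eq_single j]
      · simp
      · intro j' _ hj'; rw [Pi.single_eq_of_ne hj']; ring
      · simp
    simp only [Eapp, hx]
    exact fun h => hj (Real.exp_injective h)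
  obtain ⟨⟨g₀, hg₀A⟩, hg₀⟩ :=
    ContinuousMap.exists_mem_subalgebra_near_continuous_of_separatesPoints
      A hsep (fun x : K => g x) (hg.comp continuous_subtype_val) (ε/2) (by positivity)
  simp only [Real.norm_eq_abs] at hg₀
  -- decompose g₀ as a finite linear combination of exponentials
  have hspan : g₀ ∈ Submodule.span ℝ S := by
    have h1 := Algebra.adjoin_eq_span (R := ℝ) (s := S)
    have h2 : (Submonoid.closure S : Set C(K,ℝ)) = S := by
      have h3 : Submonoid.closure S = Mo := Submonoid.closure_eq Mo
      rw [h3]; rfl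
    have : g₀ ∈ Subalgebra.toSubmodule A := hg₀A
    rwa [h1, h2] at this
  obtain ⟨e, u, f, hsum⟩ := Submodule.mem_span_set'.mp hspan
  choose w hw using fun i => (f i).2
  have hrepr : ∀ x : K, g₀ x = ∑ i, u i * Real.exp (∑ j, w i j * (x : Fin d → ℝ) j) := by
    intro x
    rw [← hsum]
    rw [ContinuousMap.sum_apply]
    refine Finset.sum_congr rfl fun i _ => ?_
    rw [ContinuousMap.smul_apply, smul_eq_mul, ← hw i, Eapp]
  -- choose the scale M
  set B : Fin e → ℝ := fun i => ∑ j, |w i j| with hBdef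
  set C : ℝ := ∑ i, |u i| * Real.exp (2 * B i) with hCdef
  have hC0 : 0 ≤ C := Finset.sum_nonneg fun i _ => by positivity
  set M : ℝ := Real.log ((C + 1) * (2 / ε)) with hMdef
  have hexpM : Real.exp (-M) = ((C + 1) * (2 / ε))⁻¹ := by
    rw [Real.exp_neg, Real.exp_log (by positivity)]
  refine ⟨e, fun i => u i * Real.exp M, w, fun _ => -M, ?_⟩
  intro x hx
  have hxK : x ∈ K := by
    rw [hKdef, Set.mem_Icc]
    constructor <;> intro j
    · exact (hx j).1
    · exact (hx j).2
  have hgg₀ : |g x - g₀ ⟨x, hxK⟩| < ε / 2 := by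
    have := hg₀ ⟨x, hxK⟩
    rw [abs_sub_comm]
    exact this
  -- bound the sigmoid-network error against g₀
  have hterm : ∀ i : Fin e,
      |u i * Real.exp (∑ j, w i j * x j)
        - u i * Real.exp M * sigmoid (-M + ∑ j, w i j * x j)|
        ≤ |u i| * Real.exp (2 * B i) * Real.exp (-M) := by
    intro i
    have haB : (∑ j, w i j * x j) ≤ B i := by
      refine Finset.sum_le_sum fun j _ => ?_
      calc w i j * x j ≤ |w i j * x j| := le_abs_self _
        _ = |w i j| * |x j| := abs_mul _ _
        _ ≤ |w i j| * 1 := by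
            refine mul_le_mul_of_nonneg_left ?_ (abs_nonneg _)
            rw [abs_of_nonneg (hx j).1]; exact (hx j).2
        _ = |w i j| := mul_one _
    have key := sigmoid_approx_exp (M := M) haB
    have heq : u i * Real.exp (∑ j, w i j * x j)
        - u i * Real.exp M * sigmoid (-M + ∑ j, w i j * x j)
        = u i * (Real.exp (∑ j, w i j * x j)
            - Real.exp M * sigmoid ((∑ j, w i j * x j) - M)) := by
      rw [show -M + ∑ j, w i j * x j = (∑ j, w i j * x j) - M by ring]
      ring
    rw [heq, abs_mul]
    calc |u i| * |Real.exp (∑ j, w i j * x j)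
          - Real.exp M * sigmoid ((∑ j, w i j * x j) - M)|
        ≤ |u i| * Real.exp (2 * B i - M) :=
          mul_le_mul_of_nonneg_left key (abs_nonneg _)
      _ = |u i| * Real.exp (2 * B i) * Real.exp (-M) := by
          rw [mul_assoc, ← Real.exp_add]; ring_nf
  have hnet : |g₀ ⟨x, hxK⟩ - ∑ i, (u i * Real.exp M) * sigmoid (-M + ∑ j, w i j * x j)|
      < ε / 2 := by
    rw [hrepr ⟨x, hxK⟩]
    have h1 : |∑ i, (u i * Real.exp (∑ j, w i j * x j)
        - (u i * Real.exp M) * sigmoid (-M + ∑ j, w i j * x j))|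
        ≤ ∑ i, |u i| * Real.exp (2 * B i) * Real.exp (-M) := by
      refine (Finset.abs_sum_le_sum_abs _ _).trans ?_
      exact Finset.sum_le_sum fun i _ => hterm i
    rw [Finset.sum_sub_distrib] at h1
    refine lt_of_le_of_lt h1 ?_
    rw [← Finset.sum_mul, ← hCdef, hexpM]
    rw [mul_inv_lt_iff₀ (by positivity)]
    have h4 : ε / 2 * ((C + 1) * (2 / ε)) = C + 1 := by field_simp
    rw [h4]
    linarith
  calc |g x - ∑ i, (u i * Real.exp M) * sigmoid (-M + ∑ j, w i j * x j)|
      ≤ |g x - g₀ ⟨x, hxK⟩|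
        + |g₀ ⟨x, hxK⟩ - ∑ i, (u i * Real.exp M) * sigmoid (-M + ∑ j, w i j * x j)| :=
        abs_sub_le _ _ _
    _ < ε / 2 + ε / 2 := add_lt_add hgg₀ hnet
    _ = ε := by ring
end

section
/- (Four activation units suffice to approximate a product.) Let σ : ℝ → ℝ be twice continuously differentiable at 0 (ContDiffAt ℝ 2 σ 0) with second derivative σ''(0) ≠ 0. Then for all x, y ∈ ℝ, the expression (σ(a(x+y)) + σ(-a(x+y)) - σ(a(x-y)) - σ(-a(x-y))) / (4 a² σ''(0)) tends to x·y as a tends to 0 with a ≠ 0. Hence the monomial x·y can be approximated to any desired accuracy by a linear combination of 4 activation units. -/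
/-!
By Taylor's theorem with Peano remainder, `σ u + σ (-u) = 2 σ 0 + σ''(0) u² + o(u²)`: the odd
terms cancel. The four-unit combination is the difference of this even part at `u = a (x + y)`
and at `u = a (x - y)`, so it equals `σ''(0) a² ((x + y)² - (x - y)²) + o(a²)`, that is
`4 σ''(0) a² x y + o(a²)`.
-/

open Filter Topology Asymptotics
open scoped Nat

section

variable {E : Type*} [NormedAddCommGroup E] [NormedSpace ℝ E]

theorem ContDiffAt.isLittleO_sub_taylor {f : ℝ → E} {x₀ : ℝ} {n : ℕ}
    (hf : ContDiffAt ℝ n f x₀) :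
    (fun x => f x - ∑ k ∈ Finset.range (n + 1), ((k ! : ℝ)⁻¹ * (x - x₀) ^ k) • iteratedDeriv k f x₀)
      =o[𝓝 x₀] fun x => (x - x₀) ^ n := by
  obtain ⟨u, hu, hfu⟩ := hf.contDiffOn le_rfl (by simp)
  obtain ⟨ε, hε, hball⟩ := Metric.mem_nhds_iff.1 hu
  have hx₀ : x₀ ∈ Metric.ball x₀ ε := Metric.mem_ball_self hε
  have htaylor := taylor_isLittleO (convex_ball x₀ ε) hx₀ (hfu.mono hball)
  rw [nhdsWithin_eq_nhds.2 (Metric.ball_mem_nhds x₀ hε)] at htaylor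
  refine htaylor.congr_left fun x => ?_
  simp only [taylor_within_apply, iteratedDerivWithin_of_isOpen Metric.isOpen_ball hx₀]

theorem ContDiffAt.isLittleO_symmetric_second_difference {f : ℝ → E} {x : ℝ}
    (hf : ContDiffAt ℝ 2 f x) :
    (fun t => f (x + t) + f (x - t) - (2 : ℝ) • f x - t ^ 2 • iteratedDeriv 2 f x)
      =o[𝓝 0] fun t => t ^ 2 := by
  have hplus := (hf.isLittleO_sub_taylor.comp_tendsto
    (by simpa using (continuous_const_add x).tendsto 0 : Tendsto (x + ·) (𝓝 0) (𝓝 x))).congr_right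
    (g₂ := fun t => t ^ 2) fun t => by simp
  have hminus := (hf.isLittleO_sub_taylor.comp_tendsto
    (by simpa using (continuous_sub_left x).tendsto 0 : Tendsto (x - ·) (𝓝 0) (𝓝 x))).congr_right
    (g₂ := fun t => t ^ 2) fun t => by simp
  refine (hplus.add hminus).congr_left fun t => ?_
  simp only [Function.comp_apply, Finset.sum_range_succ, Finset.sum_range_zero,
    add_sub_cancel_left, sub_sub_cancel_left, iteratedDeriv_zero, iteratedDeriv_one, Nat.factorial]
  module

end

theorem ContDiffAt.isLittleO_symmetric_second_difference_comp_mul {σ : ℝ → ℝ}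
    (hσ : ContDiffAt ℝ 2 σ 0) (c : ℝ) :
    (fun a => σ (a * c) + σ (-(a * c)) - 2 * σ 0 - iteratedDeriv 2 σ 0 * c ^ 2 * a ^ 2)
      =o[𝓝 0] fun a => a ^ 2 := by
  have hscale : Tendsto (· * c) (𝓝 0) (𝓝 0) := by
    simpa using (continuous_mul_const c).tendsto 0
  refine ((hσ.isLittleO_symmetric_second_difference.comp_tendsto hscale).trans_isBigO ?_)
    |>.congr_left fun a => ?_
  · exact (isBigO_const_mul_self (c ^ 2) _ _).congr_left fun a => by simp [mul_pow, mul_comm]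
  · simp only [Function.comp_apply, zero_add, zero_sub, smul_eq_mul]
    ring

/-- Four activation units suffice to approximate the product `x * y`: for an activation
`σ` twice continuously differentiable at `0` with `σ''(0) ≠ 0`, the combination
`(σ(a(x+y)) + σ(-a(x+y)) - σ(a(x-y)) - σ(-a(x-y))) / (4 a² σ''(0))` tends to `x * y`
as `a → 0`, `a ≠ 0`. -/
theorem four_units_approximate_product (σ : ℝ → ℝ)
    (hσ : ContDiffAt ℝ 2 σ 0) (hσ'' : iteratedDeriv 2 σ 0 ≠ 0) (x y : ℝ) :
    Filter.Tendsto
      (fun a : ℝ =>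
        (σ (a * (x + y)) + σ (-(a * (x + y))) - σ (a * (x - y)) - σ (-(a * (x - y)))) /
          (4 * a ^ 2 * iteratedDeriv 2 σ 0))
      (nhdsWithin 0 {0}ᶜ) (nhds (x * y)) := by
  have hpolar := ((hσ.isLittleO_symmetric_second_difference_comp_mul (x + y)).sub
    (hσ.isLittleO_symmetric_second_difference_comp_mul (x - y))).tendsto_div_nhds_zero
  have hlim := ((hpolar.mono_left (nhdsWithin_le_nhds (s := {0}ᶜ))).div_const
    (4 * iteratedDeriv 2 σ 0)).const_add (x * y)
  rw [zero_div, add_zero] at hlim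
  refine hlim.congr' ?_
  filter_upwards [self_mem_nhdsWithin] with a (ha : a ≠ 0)
  field_simp
  ring
end

section
/- (Realizable depth range for binary-tree decompositions of an n-fold product.) For every n ≥ 1 and every natural number h with ⌈log₂ n⌉ ≤ h ≤ n - 1, there exists a binary tree t with exactly n leaves and height exactly h. In particular, the product x₁x₂⋯xₙ can be decomposed as a recursive product of two factors arranged in a binary tree whose number of levels ranges from the minimum ⌈log₂ n⌉ (complete binary tree) to the maximum n - 1 (caterpillar/full-depth tree). -/
/-!
Induction on the height `h`. A leaf count `n` in `[h + 2, 2 ^ (h + 1)]` splits as `n = a + b`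
with `a = max (h + 1) (n - 2 ^ h)` in `[h + 1, 2 ^ h]` and `b` in `[1, 2 ^ h]`; graft a tree of
height exactly `h` with `a` leaves and a tree of height at most `h` with `b` leaves under a new
root. Trees of the second kind come from halving the leaf count at every level.
-/

namespace BinaryTree

variable {α : Type*} [Inhabited α]

theorem exists_numLeaves_eq_height_le (h n : ℕ) (hn₁ : 1 ≤ n) (hn₂ : n ≤ 2 ^ h) :
    ∃ t : BinaryTree α, t.numLeaves = n ∧ t.height ≤ h := by
  induction h generalizing n with
  | zero => exact ⟨nil, by simp only [numLeaves]; omega, le_rfl⟩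
  | succ h ih =>
    obtain rfl | hn₁ := eq_or_lt_of_le hn₁
    · exact ⟨nil, rfl, Nat.zero_le _⟩
    rw [pow_succ] at hn₂
    obtain ⟨l, hl, hlh⟩ := ih (n / 2) (by omega) (by omega)
    obtain ⟨r, hr, hrh⟩ := ih (n - n / 2) (by omega) (by omega)
    refine ⟨node default l r, by simp only [numLeaves]; omega, ?_⟩
    simp only [height]
    omega

theorem exists_numLeaves_eq_height_eq (h n : ℕ) (hn₁ : h + 1 ≤ n) (hn₂ : n ≤ 2 ^ h) :
    ∃ t : BinaryTree α, t.numLeaves = n ∧ t.height = h := by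
  induction h generalizing n with
  | zero => exact ⟨nil, by simp only [numLeaves]; omega, rfl⟩
  | succ h ih =>
    rw [pow_succ] at hn₂
    have hh : h + 1 ≤ 2 ^ h := h.lt_two_pow_self
    set a := max (h + 1) (n - 2 ^ h)
    obtain ⟨l, hl, hlh⟩ := ih a (le_max_left _ _) (by omega)
    obtain ⟨r, hr, hrh⟩ := exists_numLeaves_eq_height_le (α := α) h (n - a) (by omega) (by omega)
    refine ⟨node default l r, by simp only [numLeaves]; omega, ?_⟩
    simp only [height]
    omega

end BinaryTree

/-- Realizable depth range for binary-tree decompositions of an `n`-fold product: for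
every `n ≥ 1` and every `h` with `⌈log₂ n⌉ ≤ h ≤ n - 1`, there is a binary tree with
exactly `n` leaves and height exactly `h`. -/
theorem exists_tree_with_leaves_and_height (n : ℕ) (hn : 1 ≤ n)
    (h : ℕ) (h₁ : Nat.clog 2 n ≤ h) (h₂ : h ≤ n - 1) :
    ∃ t : Tree Unit, t.numLeaves = n ∧ t.height = h :=
  BinaryTree.exists_numLeaves_eq_height_eq h n (by omega)
    ((Nat.clog_le_iff_le_pow one_lt_two).mp h₁)
end
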